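/- arXiv:1412.5139 — 2 statements merged into one kernel-verified Lean document; each statement's English description precedes it below -/
import Mathlib

section
/- Let a : Θ × 𝕌 → 𝕏 be an association map and G a group acting on 𝕏, Θ, and 𝕌 such that g·a(θ,u) = a(g·θ, g·u) for all g, θ, u. For an assertion A ⊆ Θ, define U_A(x) = {u : x = a(θ,u) for some θ ∈ A} and G_A = {g ∈ G : g·A = A}. Then U_A(g·x) = g·U_A(x) for all g ∈ G_A and all x ∈ 𝕏. -/
open Set Pointwise

/-- If g·a(θ,u) = a(g·θ, g·u) for all g, θ, u, then for an assertion
A ⊆ Θ, the a-events U_A(x) = {u : x = a(θ,u) for some θ ∈ A} satisfy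
U_A(g·x) = g·U_A(x) for all g with g·A = A. -/
theorem aevent_equivariance {G Θ 𝕌 𝕏 : Type*} [Group G]
    [MulAction G Θ] [MulAction G 𝕌] [MulAction G 𝕏]
    (a : Θ × 𝕌 → 𝕏)
    (hcomm : ∀ (g : G) (θ : Θ) (u : 𝕌), g • a (θ, u) = a (g • θ, g • u))
    (A : Set Θ) :
    ∀ g : G, g • A = A → ∀ x : 𝕏,
      {u : 𝕌 | ∃ θ ∈ A, g • x = a (θ, u)} = g • {u : 𝕌 | ∃ θ ∈ A, x = a (θ, u)} := by
  intro g hg x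
  ext u
  simp only [Set.mem_setOf_eq, Set.mem_smul_set]
  constructor
  · rintro ⟨θ, hθ, hx⟩
    refine ⟨g⁻¹ • u, ⟨g⁻¹ • θ, ?_, ?_⟩, by simp⟩
    · rw [← hg] at hθ
      obtain ⟨θ', hθ', rfl⟩ := hθ
      simpa using hθ'
    · have := congrArg (g⁻¹ • ·) hx
      simpa [hcomm g⁻¹] using this
  · rintro ⟨v, ⟨θ, hθ, hx⟩, rfl⟩
    refine ⟨g • θ, ?_, ?_⟩
    · rw [← hg]; exact ⟨θ, hθ, rfl⟩
    · rw [hx, hcomm]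
end

section
/- Let pl : Subsets × Data → [0,1] satisfy: (a) for the true index set 𝓘, P{pl_T(B_𝓘) > α} ≥ 1 − α, and (b) pl is monotone in the sense that I ⊆ I' implies pl_T(B_I) ≤ pl_T(B_{I'}). Define Î_α(T) as a smallest set I with pl_T(B_I) > α. Then P{Î_α(T) ⊆ 𝓘} ≥ 1 − α. -/
open Set MeasureTheory

/-- If pl_T(B_I) > α iff all excluded t-statistics have
1 − F(|T_i|) > α (monotone plausibility determined by max_{i∉I}|T_i|),
Î_α(T) = {i : 1 − F(|T_i|) ≤ α} is the smallest set with pl > α, and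
P{pl_T(B_𝓘) > α} ≥ 1 − α for the true index set 𝓘, then P{Î_α(T) ⊆ 𝓘} ≥ 1 − α. -/
theorem selection_validity {Ω : Type*} [MeasurableSpace Ω]
    (μ : Measure Ω) [IsProbabilityMeasure μ]
    (p : ℕ) (T : Ω → Fin p → ℝ) (F : ℝ → ℝ) (hFmono : Monotone F)
    (α : ℝ) (hα : α ∈ Set.Ioo (0:ℝ) 1)
    (pl : Set (Fin p) → Ω → ℝ)
    (hpl : ∀ (I : Set (Fin p)) (ω : Ω), pl I ω > α ↔ ∀ i ∉ I, 1 - F (|T ω i|) > α)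
    (Ihat : Ω → Set (Fin p))
    (hIhat : ∀ ω, Ihat ω = {i : Fin p | 1 - F (|T ω i|) ≤ α})
    (𝓘 : Set (Fin p))
    (hvalid : ENNReal.ofReal (1 - α) ≤ μ {ω | pl 𝓘 ω > α}) :
    ENNReal.ofReal (1 - α) ≤ μ {ω | Ihat ω ⊆ 𝓘} := by
  refine hvalid.trans (measure_mono ?_)
  intro ω hω
  show Ihat ω ⊆ 𝓘
  have hω := (hpl 𝓘 ω).mp hω
  intro i hi
  rw [hIhat ω] at hi
  by_contra h
  exact absurd (hω i h) (not_lt.2 hi)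
end
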